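/- arXiv:2106.14025 — 3 statements merged into one kernel-verified Lean document; each statement's English description precedes it below -/
import Mathlib

section
/- Let μ, λ, γ, η_s, η_p be complex constants with γ² ≠ η_s·η_p. Then there exists a unique 2×2 complex matrix Z = (Z₁₁, Z₁₂; Z₂₁, Z₂₂) with the following property: for every A_s, A_p ∈ ℂ and every z ∈ ℝ, setting u_s(z) := A_s·exp(−η_s·z), u_p(z) := A_p·exp(−η_p·z), u_x := −u_s′ + iγ·u_p, u_z := iγ·u_s + u_p′, σ_xz := μ·(u_x′ + iγ·u_z), and σ_zz := (λ+2μ)·u_z′ + iγλ·u_x, one has σ_xz(z) = Z₁₁·u_x(z) + Z₁₂·u_z(z) and σ_zz(z) = Z₂₁·u_x(z) + Z₂₂·u_z(z). -/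
private lemma key_hasDeriv (a c : ℂ) (z : ℝ) :
    HasDerivAt (fun t : ℝ => a * Complex.exp (c * (t : ℂ))) (a * c * Complex.exp (c * z)) z := by
  have h1 : HasDerivAt (fun t : ℝ => (t : ℂ)) 1 z := Complex.ofRealCLM.hasDerivAt
  have h2 : HasDerivAt (fun t : ℝ => c * (t : ℂ)) c z := by simpa using h1.const_mul c
  have h3 := (Complex.hasDerivAt_exp (c * z)).comp z h2
  simpa [mul_comm, mul_assoc, mul_left_comm] using h3.const_mul a

private lemma key_deriv (a c : ℂ) (z : ℝ) :
    deriv (fun t : ℝ => a * Complex.exp (c * (t : ℂ))) z = a * c * Complex.exp (c * z) :=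
  (key_hasDeriv a c z).deriv

private lemma dux_lem (As Ap es ep ga : ℂ) (z : ℝ) :
    deriv (fun t : ℝ => -(As * -es * Complex.exp (-es * (t : ℂ))) +
      Complex.I * ga * (Ap * Complex.exp (-ep * (t : ℂ)))) z
    = -(As * -es * -es * Complex.exp (-es * (z : ℂ))) +
      Complex.I * ga * (Ap * -ep * Complex.exp (-ep * (z : ℂ))) := by
  have h1 := (key_hasDeriv (As * -es) (-es) z).neg
  have h2 := (key_hasDeriv Ap (-ep) z).const_mul (Complex.I * ga)
  exact (h1.add h2).deriv

private lemma duz_lem (As Ap es ep ga : ℂ) (z : ℝ) :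
    deriv (fun t : ℝ => Complex.I * ga * (As * Complex.exp (-es * (t : ℂ))) +
      Ap * -ep * Complex.exp (-ep * (t : ℂ))) z
    = Complex.I * ga * (As * -es * Complex.exp (-es * (z : ℂ))) +
      Ap * -ep * -ep * Complex.exp (-ep * (z : ℂ)) := by
  have h1 := (key_hasDeriv As (-es) z).const_mul (Complex.I * ga)
  have h2 := key_hasDeriv (Ap * -ep) (-ep) z
  exact (h1.add h2).deriv

/-- existence and uniqueness of the seismic impedance tensor `Z` of a
homogeneous half-space, linking the stress amplitudes `(σ_xz, σ_zz)` to the displacement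
amplitudes `(u_x, u_z)` for every choice of decaying potentials, provided `γ² ≠ η_s·η_p`. -/
theorem impedance_tensor_exists_unique
    (mu lam ga es ep : ℂ) (h : ga ^ 2 ≠ es * ep) :
    ∃! Z : Matrix (Fin 2) (Fin 2) ℂ,
      ∀ (As Ap : ℂ) (z : ℝ),
        let us : ℝ → ℂ := fun t => As * Complex.exp (-es * (t : ℂ))
        let up : ℝ → ℂ := fun t => Ap * Complex.exp (-ep * (t : ℂ))
        let ux : ℝ → ℂ := fun t => -(deriv us t) + Complex.I * ga * up t
        let uz : ℝ → ℂ := fun t => Complex.I * ga * us t + deriv up t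
        let sxz : ℝ → ℂ := fun t => mu * (deriv ux t + Complex.I * ga * uz t)
        let szz : ℝ → ℂ := fun t => (lam + 2 * mu) * deriv uz t + Complex.I * ga * lam * ux t
        sxz z = Z 0 0 * ux z + Z 0 1 * uz z ∧ szz z = Z 1 0 * ux z + Z 1 1 * uz z := by
  have hd : ga ^ 2 - es * ep ≠ 0 := sub_ne_zero.mpr h
  refine ⟨!![mu * ep * (es ^ 2 - ga ^ 2) / (ga ^ 2 - es * ep),
       Complex.I * ga * mu * (es ^ 2 + ga ^ 2 - 2 * es * ep) / (ga ^ 2 - es * ep);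
       Complex.I * ga * (2 * es * ep * mu - (lam + 2 * mu) * ep ^ 2 + lam * ga ^ 2) / (ga ^ 2 - es * ep),
       (es * ((lam + 2 * mu) * ep ^ 2 - lam * ga ^ 2) - 2 * ga ^ 2 * es * mu) / (ga ^ 2 - es * ep)],
      ?_, ?_⟩
  · intro As Ap z us up ux uz sxz szz
    simp only [us, up, ux, uz, sxz, szz]
    simp only [key_deriv]
    simp only [dux_lem, duz_lem]
    simp only [Fin.isValue, Matrix.of_apply, Matrix.cons_val', Matrix.cons_val_zero,
      Matrix.empty_val', Matrix.cons_val_fin_one, Matrix.cons_val_one, Matrix.head_cons,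
      Matrix.head_fin_const]
    constructor
    · field_simp
      ring_nf
      simp only [Complex.I_sq, Complex.I_pow_four]
      ring
    · field_simp
      ring_nf
      simp only [Complex.I_sq, Complex.I_pow_four]
      ring
  · intro Z' hZ'
    have h1 := hZ' 1 0 0
    have h2 := hZ' 0 1 0
    simp only [key_deriv] at h1 h2
    simp only [dux_lem, duz_lem] at h1 h2
    simp only [Complex.ofReal_zero, mul_zero, Complex.exp_zero, mul_one, one_mul, zero_mul,
      mul_zero, add_zero, zero_add, neg_neg, neg_zero] at h1 h2
    obtain ⟨h1a, h1b⟩ := h1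
    obtain ⟨h2a, h2b⟩ := h2
    have hI : Complex.I * Complex.I = -1 := Complex.I_mul_I
    ext i j
    fin_cases i <;> fin_cases j <;>
      simp only [Fin.isValue, Fin.zero_eta, Fin.mk_one, Matrix.of_apply, Matrix.cons_val',
        Matrix.cons_val_zero, Matrix.empty_val', Matrix.cons_val_fin_one, Matrix.cons_val_one,
        Matrix.head_cons, Matrix.head_fin_const]
    · rw [eq_div_iff hd]
      linear_combination ep * h1a + Complex.I * ga * h2a + ga ^ 2 * (Z' 0 0 + mu * ep) * hI
    · rw [eq_div_iff hd]
      linear_combination Complex.I * ga * h1a + (-es) * h2a +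
        (ga ^ 2 * Z' 0 1 - Complex.I * ga ^ 3 * mu) * hI
    · rw [eq_div_iff hd]
      linear_combination ep * h1b + Complex.I * ga * h2b +
        (ga ^ 2 * Z' 1 0 - Complex.I * ga ^ 3 * lam) * hI
    · rw [eq_div_iff hd]
      linear_combination Complex.I * ga * h1b + (-es) * h2b +
        (ga ^ 2 * Z' 1 1 + es * ga ^ 2 * (lam + 2 * mu)) * hI
end

section
/- Let μ, λ, γ, η_s, η_p be complex constants with γ² ≠ η_s·η_p. For every A_s, A_p ∈ ℂ and every z ∈ ℝ, setting u_s(z) := A_s·exp(−η_s·z), u_p(z) := A_p·exp(−η_p·z), u_x := −u_s′ + iγ·u_p, u_z := iγ·u_s + u_p′, σ_xz := μ·(u_x′ + iγ·u_z), and σ_zz := (λ+2μ)·u_z′ + iγλ·u_x, one has σ_xz(z) = Z₁₁·u_x(z) + Z₁₂·u_z(z) and σ_zz(z) = Z₂₁·u_x(z) + Z₂₂·u_z(z), where Z₁₁ = μ·η_p·(η_s² − γ²)/(γ² − η_s·η_p), Z₁₂ = iγμ·(γ² + η_s² − 2η_s·η_p)/(γ² − η_s·η_p), Z₂₁ = iγ·(2μ·η_s·η_p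 − (λ+2μ)·η_p² + λγ²)/(γ² − η_s·η_p), and Z₂₂ = (λ+2μ)·η_s·(η_p² − γ²)/(γ² − η_s·η_p). -/
/-!
Since `d/dz` acts on each potential as multiplication by `-η`, the displacements and stresses at
`z` are linear forms in `u_s(z)` and `u_p(z)`, with `u_x = η_s u_s + iγ u_p` and
`u_z = iγ u_s - η_p u_p`. The claim is then an identity of rational functions in the
parameters, in which `i` enters only through `i² = -1`.
-/

open Complex

section ImpedanceAlgebra

variable {K : Type*} [Field K] (i mu lam ga es ep a b : K)

theorem shear_impedance_row (hi : i ^ 2 = -1) (h : ga ^ 2 ≠ es * ep) :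
    mu * ep * (es ^ 2 - ga ^ 2) / (ga ^ 2 - es * ep) * (es * a + i * ga * b)
      + i * ga * mu * (ga ^ 2 + es ^ 2 - 2 * es * ep) / (ga ^ 2 - es * ep) * (i * ga * a - ep * b)
      = mu * (-(es ^ 2 + ga ^ 2) * a - 2 * i * ga * ep * b) := by
  have hD : ga ^ 2 - es * ep ≠ 0 := sub_ne_zero.mpr h
  rw [div_mul_eq_mul_div, div_mul_eq_mul_div, ← add_div, div_eq_iff hD]
  linear_combination ga ^ 2 * mu * (ga ^ 2 + es ^ 2 - 2 * es * ep) * a * hi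

theorem normal_impedance_row (hi : i ^ 2 = -1) (h : ga ^ 2 ≠ es * ep) :
    i * ga * (2 * mu * es * ep - (lam + 2 * mu) * ep ^ 2 + lam * ga ^ 2) / (ga ^ 2 - es * ep)
        * (es * a + i * ga * b)
      + (lam + 2 * mu) * es * (ep ^ 2 - ga ^ 2) / (ga ^ 2 - es * ep) * (i * ga * a - ep * b)
      = -2 * i * ga * mu * es * a + ((lam + 2 * mu) * ep ^ 2 - lam * ga ^ 2) * b := by
  have hD : ga ^ 2 - es * ep ≠ 0 := sub_ne_zero.mpr h
  rw [div_mul_eq_mul_div, div_mul_eq_mul_div, ← add_div, div_eq_iff hD]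
  linear_combination ga ^ 2 * (2 * mu * es * ep - (lam + 2 * mu) * ep ^ 2 + lam * ga ^ 2) * b * hi

end ImpedanceAlgebra

theorem hasDerivAt_const_mul_cexp_neg_mul (A η : ℂ) (t : ℝ) :
    HasDerivAt (fun s : ℝ => A * exp (-η * s)) (-η * (A * exp (-η * t))) t := by
  have hlin : HasDerivAt (fun s : ℝ => -η * (s : ℂ)) (-η) t := by
    simpa using (ofRealCLM.hasDerivAt (x := t)).const_mul (-η)
  exact (hlin.cexp.const_mul A).congr_deriv (by ring)

/-- explicit formulas for the entries of the seismic impedance tensor of a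
homogeneous half-space with decaying Rayleigh-wave potentials, when `γ² ≠ η_s·η_p`. -/
theorem impedance_tensor_formulas
    (mu lam ga es ep : ℂ) (h : ga ^ 2 ≠ es * ep) :
    ∀ (As Ap : ℂ) (z : ℝ),
      let us : ℝ → ℂ := fun t => As * Complex.exp (-es * (t : ℂ))
      let up : ℝ → ℂ := fun t => Ap * Complex.exp (-ep * (t : ℂ))
      let ux : ℝ → ℂ := fun t => -(deriv us t) + Complex.I * ga * up t
      let uz : ℝ → ℂ := fun t => Complex.I * ga * us t + deriv up t
      let sxz : ℝ → ℂ := fun t => mu * (deriv ux t + Complex.I * ga * uz t)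
      let szz : ℝ → ℂ := fun t => (lam + 2 * mu) * deriv uz t + Complex.I * ga * lam * ux t
      let Z11 : ℂ := mu * ep * (es ^ 2 - ga ^ 2) / (ga ^ 2 - es * ep)
      let Z12 : ℂ := Complex.I * ga * mu * (ga ^ 2 + es ^ 2 - 2 * es * ep) / (ga ^ 2 - es * ep)
      let Z21 : ℂ := Complex.I * ga * (2 * mu * es * ep - (lam + 2 * mu) * ep ^ 2 + lam * ga ^ 2) /
        (ga ^ 2 - es * ep)
      let Z22 : ℂ := (lam + 2 * mu) * es * (ep ^ 2 - ga ^ 2) / (ga ^ 2 - es * ep)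
      sxz z = Z11 * ux z + Z12 * uz z ∧ szz z = Z21 * ux z + Z22 * uz z := by
  intro As Ap z us up ux uz sxz szz Z11 Z12 Z21 Z22
  have hus (t : ℝ) : HasDerivAt us (-es * us t) t := hasDerivAt_const_mul_cexp_neg_mul As es t
  have hup (t : ℝ) : HasDerivAt up (-ep * up t) t := hasDerivAt_const_mul_cexp_neg_mul Ap ep t
  have hux : ux = fun t => es * us t + I * ga * up t := by
    funext t; simp only [ux, (hus t).deriv]; ring
  have huz : uz = fun t => I * ga * us t - ep * up t := by
    funext t; simp only [uz, (hup t).deriv]; ring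
  have hux' : deriv ux z = es * (-es * us z) + I * ga * (-ep * up z) := by
    rw [hux]; exact (((hus z).const_mul es).add ((hup z).const_mul (I * ga))).deriv
  have huz' : deriv uz z = I * ga * (-es * us z) - ep * (-ep * up z) := by
    rw [huz]; exact (((hus z).const_mul (I * ga)).sub ((hup z).const_mul ep)).deriv
  constructor
  · have row := shear_impedance_row I mu ga es ep (us z) (up z) I_sq h
    simp only [sxz, hux', congrFun hux z, congrFun huz z]
    linear_combination mu * ga ^ 2 * us z * I_sq - row
  · have row := normal_impedance_row I mu lam ga es ep (us z) (up z) I_sq h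
    simp only [szz, huz', congrFun hux z, congrFun huz z]
    linear_combination lam * ga ^ 2 * up z * I_sq - row
end

section
/- Let μ, λ, ρ, ω, γ, η_s, η_p be complex constants with γ² ≠ η_s·η_p, μ·(γ² − η_s²) = ω²ρ, and (λ+2μ)·(γ² − η_p²) = ω²ρ. Define the 2×2 complex matrix Z by Z₁₁ = μ·η_p·(η_s² − γ²)/(γ² − η_s·η_p), Z₁₂ = iγμ·(γ² + η_s² − 2η_s·η_p)/(γ² − η_s·η_p), Z₂₁ = iγ·(2μ·η_s·η_p − (λ+2μ)·η_p² + λγ²)/(γ² − η_s·η_p), and Z₂₂ = (λ+2μ)·η_s·(η_p² − γ²)/(γ² − η_s·η_p). Then det Z = Z₁₁·Z₂₂ − Z₁₂·Z₂₁ = (η_s·η_p·ω⁴ρ² − γ²·(ω²ρ − 2μ·(γ² − η_s·η_p))²)/(γ² − η_s·η_p)². -/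
/-- the determinant of the half-space seismic impedance tensor. -/
theorem impedance_tensor_det
    (mu lam rho om ga es ep : ℂ) (h : ga ^ 2 ≠ es * ep)
    (hs : mu * (ga ^ 2 - es ^ 2) = om ^ 2 * rho)
    (hp : (lam + 2 * mu) * (ga ^ 2 - ep ^ 2) = om ^ 2 * rho) :
    let Z11 : ℂ := mu * ep * (es ^ 2 - ga ^ 2) / (ga ^ 2 - es * ep)
    let Z12 : ℂ := Complex.I * ga * mu * (ga ^ 2 + es ^ 2 - 2 * es * ep) / (ga ^ 2 - es * ep)
    let Z21 : ℂ := Complex.I * ga * (2 * mu * es * ep - (lam + 2 * mu) * ep ^ 2 + lam * ga ^ 2) /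
      (ga ^ 2 - es * ep)
    let Z22 : ℂ := (lam + 2 * mu) * es * (ep ^ 2 - ga ^ 2) / (ga ^ 2 - es * ep)
    Z11 * Z22 - Z12 * Z21 =
      (es * ep * om ^ 4 * rho ^ 2 - ga ^ 2 * (om ^ 2 * rho - 2 * mu * (ga ^ 2 - es * ep)) ^ 2) /
        (ga ^ 2 - es * ep) ^ 2 := by
  intro Z11 Z12 Z21 Z22
  have hI : Complex.I ^ 2 = -1 := Complex.I_sq
  simp only [Z11, Z12, Z21, Z22]
  rw [div_mul_div_comm, div_mul_div_comm, ← sub_div, ← sq]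
  congr 1
  linear_combination
    (rho * om ^ 2 * (es * ep - ga ^ 2) + 2 * mu * ga ^ 2 * (ga ^ 2 - es * ep)) * hs
    + (- mu * es ^ 3 * ep - mu * ga ^ 2 * es * ep + mu * ga ^ 2 * es ^ 2 + mu * ga ^ 4) * hp
    - (ga * mu * (ga ^ 2 + es ^ 2 - 2 * es * ep)
        * (ga * (2 * mu * es * ep - (lam + 2 * mu) * ep ^ 2 + lam * ga ^ 2))) * hI
end
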